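/- arXiv:1707.01852 — 2 statements merged into one kernel-verified Lean document; each statement's English description precedes it below -/
import Mathlib

section
/- Every ζ ∈ 𝒮 satisfies ζ(r) ≤ 1 for all r ∈ [0,∞). Moreover, for every integer d ≥ 1, every ζ ∈ 𝒮, every even integer M ≥ 2, every localization datum L in Λ(M), and every x ∈ Λ(M): ∑_{y∈Λ(M)} F_ζ(d^Λ_L(x,y)) ≤ ζ(dist(x,L))·‖F‖_Γ ≤ ‖F‖_Γ. (Lemma C.1.) -/
/-!
Supermultiplicativity gives `ζ(r)^(n+1) ≤ ζ((n+1)r)`, which stays bounded, so `ζ ≤ 1`.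
For the lattice sum, `d^Λ_L(x,y)` dominates both `dist(x,L)` and `d^Λ(x,y)`, and `ζ` and `F` are
non-increasing, so each term is at most `ζ(dist(x,L)) F(d^Λ(x,y))`. The map
`y ↦ (valMinAbs (y_j - x_j))_j` embeds `Λ(M)` into `ℤ^d` injectively with `ℓ¹`-norm `d^Λ(x,y)`,
so what remains is a partial sum of `‖F‖_Γ`; the latter converges by comparison with the
lattice `p`-series `∑_{z ∈ ℤ^d} ‖z‖^{-(d+1)}`.
-/

open scoped BigOperators

/-- `F r = (1+r)^{-(d+1)}`. -/
noncomputable def Ffun (d : ℕ) (r : ℝ) : ℝ := ((1 + r) ^ (d + 1))⁻¹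

/-- ℓ¹ norm on `ℤ^d`, valued in `ℕ`. -/
def l1norm {d : ℕ} (y : Fin d → ℤ) : ℕ := ∑ j, (y j).natAbs

/-- `‖F‖_Γ := ∑_{y ∈ ℤ^d} F(‖y‖₁)`. -/
noncomputable def FnormGamma (d : ℕ) : ℝ := ∑' y : Fin d → ℤ, Ffun d (l1norm y)

/-- The quotient ℓ¹-metric on `ℤ/Mℤ`: `min_{k∈ℤ} |b + kM|` where `b` is any lift of `v - u`. -/
def torusD (M : ℕ) (u v : ZMod M) : ℕ := min (v - u).val (M - (v - u).val)

/-- The quotient ℓ¹-metric `d^Λ` on the discrete torus `Λ(M) = (ℤ/Mℤ)^d`. -/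
def dTorus {M d : ℕ} (x y : Fin d → ZMod M) : ℕ := ∑ j, torusD M (x j) (y j)

/-- `dist(x, L)` for a localization datum `L = (ℓ, l)`. -/
def distLoc {M d : ℕ} (ℓ : Fin d → Bool) (l : Fin d → ZMod M) (x : Fin d → ZMod M) : ℕ :=
  ∑ j, if ℓ j then torusD M (x j) (l j) else 0

/-- The weighted "metric" `d^Λ_L(x,y) = d^Λ(x,y) + dist(x,L) + dist(y,L)`. -/
def dTorusL {M d : ℕ} (ℓ : Fin d → Bool) (l : Fin d → ZMod M) (x y : Fin d → ZMod M) : ℕ :=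
  dTorus x y + distLoc ℓ l x + distLoc ℓ l y

/-- The set `𝒮` of weight functions: positive, bounded, non-increasing, log-superadditive
functions on `[0,∞)` decaying faster than any inverse power. -/
def InS (ζ : ℝ → ℝ) : Prop :=
  (∀ r : ℝ, 0 ≤ r → 0 < ζ r) ∧
  BddAbove (ζ '' Set.Ici (0 : ℝ)) ∧
  (∀ r s : ℝ, 0 ≤ r → r ≤ s → ζ s ≤ ζ r) ∧
  (∀ r s : ℝ, 0 ≤ r → 0 ≤ s → ζ r * ζ s ≤ ζ (r + s)) ∧
  (∀ n : ℕ, ∃ C : ℝ, ∀ r : ℝ, 0 ≤ r → r ^ n * ζ r ≤ C)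

/-- `F_ζ r = ζ(r)/(1+r)^{d+1}`. -/
noncomputable def Fzeta (d : ℕ) (ζ : ℝ → ℝ) (r : ℝ) : ℝ := ζ r * ((1 + r) ^ (d + 1))⁻¹

open Module

lemma le_one_of_supermul_of_bddAbove {ζ : ℝ → ℝ} (hbdd : BddAbove (ζ '' Set.Ici 0))
    (hsup : ∀ r s : ℝ, 0 ≤ r → 0 ≤ s → ζ r * ζ s ≤ ζ (r + s)) {r : ℝ} (hr : 0 ≤ r) :
    ζ r ≤ 1 := by
  by_contra! hgt
  obtain ⟨b, hb⟩ := hbdd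
  have hpow_le : ∀ n : ℕ, ζ r ^ (n + 1) ≤ ζ ((n + 1) * r) := by
    intro n
    induction n with
    | zero => simp
    | succ n ih =>
      calc ζ r ^ (n + 1 + 1) = ζ r ^ (n + 1) * ζ r := pow_succ _ _
        _ ≤ ζ ((n + 1) * r) * ζ r := by gcongr
        _ ≤ ζ ((n + 1) * r + r) := hsup _ _ (by positivity) hr
        _ = ζ ((↑(n + 1) + 1) * r) := by push_cast; ring_nf
  obtain ⟨n, hn⟩ := pow_unbounded_of_one_lt b hgt
  have hb_ge : ζ ((n + 1) * r) ≤ b := hb ⟨_, Set.mem_Ici.mpr (by positivity), rfl⟩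
  have hmono : ζ r ^ n ≤ ζ r ^ (n + 1) := pow_le_pow_right₀ hgt.le n.le_succ
  linarith [hpow_le n]

lemma Ffun_nonneg (d : ℕ) {r : ℝ} (hr : 0 ≤ r) : 0 ≤ Ffun d r := by
  unfold Ffun; positivity

lemma Ffun_le_Ffun (d : ℕ) {r s : ℝ} (hr : 0 ≤ r) (hrs : r ≤ s) : Ffun d s ≤ Ffun d r := by
  unfold Ffun; gcongr

lemma natAbs_le_l1norm {d : ℕ} (y : Fin d → ℤ) (j : Fin d) : (y j).natAbs ≤ l1norm y :=
  Finset.single_le_sum (f := fun i => (y i).natAbs) (fun _ _ => Nat.zero_le _) (Finset.mem_univ j)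

lemma norm_intCast_le_l1norm {d : ℕ} (y : Fin d → ℤ) : ‖fun j => (y j : ℝ)‖ ≤ l1norm y :=
  (pi_norm_le_iff_of_nonneg (Nat.cast_nonneg _)).mpr fun j => by
    rw [Real.norm_eq_abs, ← Int.cast_abs, Int.abs_eq_natAbs]
    exact_mod_cast natAbs_le_l1norm y j

lemma summable_Ffun_l1norm (d : ℕ) : Summable fun y : Fin d → ℤ => Ffun d (l1norm y) := by
  set L := Submodule.span ℤ (Set.range (Pi.basisFun ℝ (Fin d)))
  let b := (Pi.basisFun ℝ (Fin d)).restrictScalars ℤ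
  let e : (Fin d → ℤ) ≃ L := b.equivFun.symm.toEquiv
  have he (y : Fin d → ℤ) : ((e y : L) : Fin d → ℝ) = fun j => (y j : ℝ) := by
    ext j; simp [e, b, Basis.equivFun_symm_apply, Pi.single_apply]
  have hrank : finrank ℤ L = d := by rw [finrank_eq_card_basis b, Fintype.card_fin]
  have hlattice : Summable fun y => ‖e y‖⁻¹ ^ (d + 1) :=
    (e.summable_iff (f := fun z : L => ‖z‖⁻¹ ^ (d + 1))).mpr
      (ZLattice.summable_norm_pow_inv L (d + 1) (by omega))
  refine hlattice.of_norm_bounded_eventually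
    ((Filter.eventually_cofinite_ne 0).mono fun y hy => ?_)
  have hpos : 0 < ‖e y‖ :=
    norm_pos_iff.mpr ((e.injective.ne_iff' (map_zero b.equivFun.symm)).mpr hy)
  have hle : ‖e y‖ ≤ 1 + l1norm y := by
    show ‖(e y : Fin d → ℝ)‖ ≤ _
    rw [he]; linarith [norm_intCast_le_l1norm y]
  rw [Real.norm_of_nonneg (Ffun_nonneg d (by positivity)), Ffun, inv_pow]
  gcongr

lemma FnormGamma_nonneg (d : ℕ) : 0 ≤ FnormGamma d :=
  tsum_nonneg fun _ => Ffun_nonneg d (Nat.cast_nonneg _)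

lemma l1norm_valMinAbs_sub {M d : ℕ} [NeZero M] (x y : Fin d → ZMod M) :
    l1norm (fun j => (y j - x j).valMinAbs) = dTorus x y :=
  Finset.sum_congr rfl fun _ _ => ZMod.valMinAbs_natAbs_eq_min _

lemma sum_comp_dTorus_le_tsum_comp_l1norm {M d : ℕ} [NeZero M] {f : ℕ → ℝ} (hf : 0 ≤ f)
    (hs : Summable fun z : Fin d → ℤ => f (l1norm z)) (x : Fin d → ZMod M) :
    ∑ y, f (dTorus x y) ≤ ∑' z : Fin d → ℤ, f (l1norm z) := by
  have hinj : Function.Injective fun (y : Fin d → ZMod M) j => (y j - x j).valMinAbs :=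
    fun y y' h => funext fun j =>
      sub_left_injective (ZMod.injective_valMinAbs (congrFun h j))
  calc ∑ y, f (dTorus x y)
        = ∑' y : Fin d → ZMod M, f (l1norm fun j => (y j - x j).valMinAbs) := by
        simp only [tsum_fintype, l1norm_valMinAbs_sub]
    _ ≤ ∑' z, f (l1norm z) := tsum_comp_le_tsum_of_inj hs (fun _ => hf _) hinj

lemma sum_Fzeta_dTorusL_le {M d : ℕ} [NeZero M] {ζ : ℝ → ℝ} (hpos : ∀ r : ℝ, 0 ≤ r → 0 < ζ r)
    (hanti : ∀ r s : ℝ, 0 ≤ r → r ≤ s → ζ s ≤ ζ r)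
    (ℓ : Fin d → Bool) (l x : Fin d → ZMod M) :
    ∑ y, Fzeta d ζ (dTorusL ℓ l x y) ≤ ζ (distLoc ℓ l x) * ∑ y, Ffun d (dTorus x y) := by
  rw [Finset.mul_sum]
  refine Finset.sum_le_sum fun y _ => ?_
  have hx : distLoc ℓ l x ≤ dTorusL ℓ l x y := by unfold dTorusL; omega
  have hxy : dTorus x y ≤ dTorusL ℓ l x y := by unfold dTorusL; omega
  exact mul_le_mul (hanti _ _ (Nat.cast_nonneg _) (by exact_mod_cast hx))
    (Ffun_le_Ffun d (Nat.cast_nonneg _) (by exact_mod_cast hxy))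
    (Ffun_nonneg d (Nat.cast_nonneg _)) (hpos _ (Nat.cast_nonneg _)).le

/-- Lemma C.1. Every `ζ ∈ 𝒮` satisfies `ζ ≤ 1` on `[0,∞)`; moreover for every
`d ≥ 1`, `ζ ∈ 𝒮`, even `M ≥ 2`, localization datum `L` and `x ∈ Λ(M)`:
`∑_{y∈Λ(M)} F_ζ(d^Λ_L(x,y)) ≤ ζ(dist(x,L))·‖F‖_Γ ≤ ‖F‖_Γ`. -/
theorem statement6 :
    (∀ ζ : ℝ → ℝ, InS ζ → ∀ r : ℝ, 0 ≤ r → ζ r ≤ 1) ∧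
    (∀ (d : ℕ), 1 ≤ d → ∀ ζ : ℝ → ℝ, InS ζ →
      ∀ (M : ℕ) (_ : NeZero M), Even M → 2 ≤ M →
      ∀ (ℓ : Fin d → Bool) (l : Fin d → ZMod M) (x : Fin d → ZMod M),
        (∑ y : Fin d → ZMod M, Fzeta d ζ (dTorusL ℓ l x y)) ≤
            ζ (distLoc ℓ l x) * FnormGamma d ∧
          ζ (distLoc ℓ l x) * FnormGamma d ≤ FnormGamma d) := by
  refine ⟨fun ζ ⟨_, hbdd, _, hsup, _⟩ r hr => le_one_of_supermul_of_bddAbove hbdd hsup hr, ?_⟩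
  rintro d - ζ ⟨hpos, hbdd, hanti, hsup, -⟩ M _ - - ℓ l x
  have hζx_le_one : ζ (distLoc ℓ l x) ≤ 1 :=
    le_one_of_supermul_of_bddAbove hbdd hsup (Nat.cast_nonneg _)
  refine ⟨?_, mul_le_of_le_one_left (FnormGamma_nonneg d) hζx_le_one⟩
  calc ∑ y, Fzeta d ζ (dTorusL ℓ l x y)
      ≤ ζ (distLoc ℓ l x) * ∑ y, Ffun d (dTorus x y) := sum_Fzeta_dTorusL_le hpos hanti ℓ l x
    _ ≤ ζ (distLoc ℓ l x) * FnormGamma d := mul_le_mul_of_nonneg_left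
      (sum_comp_dTorus_le_tsum_comp_l1norm (f := fun n => Ffun d n)
        (fun _ => Ffun_nonneg d (Nat.cast_nonneg _)) (summable_Ffun_l1norm d) x)
      (hpos _ (Nat.cast_nonneg _)).le
end

section
/- Let ζ ∈ 𝒮 and k ∈ ℕ₀. Then C := ∑_{z∈ℤ^k} ζ(‖z‖₁) is finite, and for every integer d ≥ 1, every even integer M ≥ 2, and every localization datum L = (ℓ, l) in Λ(M) with |ℓ| = k, one has ∑_{x∈Λ(M)} ζ(dist(x,L)) ≤ C · M^{d−k}. -/
open scoped BigOperators

/-! Only the `k` localized coordinates matter: the other `d - k` coordinates of `x` contribute a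
factor `M ^ (d - k)`, and on the localized ones `x ↦ (valMinAbs (l j - x j))_j` injects
`(ℤ/Mℤ)^k` into `ℤ^k`, carrying `dist(x, L)` to the ℓ¹ norm. Summability over `ℤ^k` follows
from `ζ r ≲ (1 + r)^(-2k) ≤ ∏ j, (1 + |z j|)^(-2)` for `r = ‖z‖₁`. -/

lemma InS.exists_one_add_pow_mul_le {ζ : ℝ → ℝ} (hζ : InS ζ) (n : ℕ) :
    ∃ C : ℝ, ∀ r : ℝ, 0 ≤ r → (1 + r) ^ n * ζ r ≤ C := by
  obtain ⟨hpos, ⟨B, hB⟩, -, -, hdecay⟩ := hζ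
  obtain ⟨C, hC⟩ := hdecay n
  refine ⟨2 ^ n * max B C, fun r hr => ?_⟩
  have hζr := (hpos r hr).le
  rcases le_total r 1 with hr1 | hr1
  · calc (1 + r) ^ n * ζ r ≤ 2 ^ n * B := by
          gcongr
          · linarith
          · exact hB ⟨r, hr, rfl⟩
      _ ≤ 2 ^ n * max B C := by gcongr; exact le_max_left _ _
  · calc (1 + r) ^ n * ζ r ≤ (2 * r) ^ n * ζ r := by gcongr; linarith
      _ = 2 ^ n * (r ^ n * ζ r) := by ring
      _ ≤ 2 ^ n * max B C := by gcongr; exact (hC r hr).trans (le_max_right _ _)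

lemma summable_inv_one_add_natAbs_sq : Summable fun n : ℤ => ((1 + (n.natAbs : ℝ)) ^ 2)⁻¹ := by
  have hnat : Summable fun n : ℕ => ((1 + (n : ℝ)) ^ 2)⁻¹ := by
    simpa [add_comm] using (summable_nat_add_iff 1).2 (Real.summable_nat_pow_inv.2 one_lt_two)
  exact .of_nat_of_neg (by simpa using hnat) (by simpa using hnat)

lemma summable_prod_pi {α : Type*} {f : α → ℝ} (hf0 : ∀ a, 0 ≤ f a) (hf : Summable f) :
    ∀ k : ℕ, Summable fun z : Fin k → α => ∏ j, f (z j)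
  | 0 => .of_finite
  | k + 1 => by
    rw [← (Fin.consEquiv fun _ => α).summable_iff]
    exact (hf.mul_of_nonneg (summable_prod_pi hf0 hf k) hf0
      fun z => Finset.prod_nonneg fun j _ => hf0 (z j)).congr fun _ => by
        simp [Fin.prod_univ_succ, Fin.consEquiv]

lemma prod_one_add_natAbs_le {k : ℕ} (z : Fin k → ℤ) :
    ∏ j, (1 + ((z j).natAbs : ℝ)) ≤ (1 + l1norm z) ^ k := by
  calc ∏ j, (1 + ((z j).natAbs : ℝ)) ≤ ∏ _j : Fin k, (1 + (l1norm z : ℝ)) := by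
        gcongr with j
        exact_mod_cast Finset.single_le_sum (f := fun i => (z i).natAbs)
          (fun i _ => Nat.zero_le _) (Finset.mem_univ j)
    _ = (1 + l1norm z) ^ k := by simp

lemma InS.summable_l1norm {ζ : ℝ → ℝ} (hζ : InS ζ) (k : ℕ) :
    Summable fun z : Fin k → ℤ => ζ (l1norm z) := by
  obtain ⟨C, hC⟩ := hζ.exists_one_add_pow_mul_le (2 * k)
  have hC0 : 0 ≤ C := (mul_nonneg (by positivity) (hζ.1 0 le_rfl).le).trans (hC 0 le_rfl)
  refine .of_nonneg_of_le (fun z => (hζ.1 _ (Nat.cast_nonneg _)).le) (fun z => ?_)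
    ((summable_prod_pi (fun n => by positivity) summable_inv_one_add_natAbs_sq k).mul_left C)
  have hr : (0 : ℝ) ≤ l1norm z := Nat.cast_nonneg _
  calc ζ (l1norm z) ≤ C * (((1 + (l1norm z : ℝ)) ^ k) ^ 2)⁻¹ := by
        rw [← div_eq_mul_inv, le_div_iff₀ (by positivity), ← pow_mul, mul_comm, mul_comm k]
        exact hC _ hr
    _ ≤ C * ∏ j, ((1 + ((z j).natAbs : ℝ)) ^ 2)⁻¹ := by
        rw [Finset.prod_inv_distrib, Finset.prod_pow]
        gcongr
        exact prod_one_add_natAbs_le z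

lemma torusD_eq_natAbs_valMinAbs {M : ℕ} [NeZero M] (u v : ZMod M) :
    torusD M u v = (v - u).valMinAbs.natAbs :=
  (ZMod.valMinAbs_natAbs_eq_min _).symm

lemma sum_sum_torusD_le_tsum_l1norm {ι : Type*} [Fintype ι] [DecidableEq ι] {k M : ℕ} [NeZero M]
    (hk : Fintype.card ι = k) (l : ι → ZMod M) {f : ℕ → ℝ} (hf0 : ∀ n, 0 ≤ f n)
    (hf : Summable fun z : Fin k → ℤ => f (l1norm z)) :
    ∑ a : ι → ZMod M, f (∑ j, torusD M (a j) (l j)) ≤ ∑' z : Fin k → ℤ, f (l1norm z) := by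
  obtain ⟨e⟩ : Nonempty (Fin k ≃ ι) := ⟨(Fintype.equivFinOfCardEq hk).symm⟩
  let Ψ : (ι → ZMod M) → Fin k → ℤ := fun a i => (l (e i) - a (e i)).valMinAbs
  have hΨ (a : ι → ZMod M) : l1norm (Ψ a) = ∑ j, torusD M (a j) (l j) := by
    simp only [l1norm, Ψ, torusD_eq_natAbs_valMinAbs]
    exact e.sum_comp fun j => (l j - a j).valMinAbs.natAbs
  have hΨinj : Function.Injective Ψ := fun a b h => funext fun j => by
    simpa [Ψ] using congrFun h (e.symm j)
  calc ∑ a : ι → ZMod M, f (∑ j, torusD M (a j) (l j)) = ∑' a, f (l1norm (Ψ a)) := by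
        simp only [hΨ, tsum_fintype]
    _ ≤ ∑' z : Fin k → ℤ, f (l1norm z) := tsum_comp_le_tsum_of_inj hf (fun z => hf0 _) hΨinj

lemma Fintype.sum_comp_restrict_subtype {ι X : Type*} [Fintype ι] [DecidableEq ι] [Fintype X]
    (p : ι → Prop) [DecidablePred p] (F : ({i // p i} → X) → ℝ) :
    ∑ x : ι → X, F (fun i => x i) = Fintype.card X ^ Fintype.card {i // ¬ p i} * ∑ a, F a := by
  rw [← (Equiv.piEquivPiSubtypeProd p fun _ => X).symm.sum_comp, Fintype.sum_prod_type]
  have h (a : {i // p i} → X) (b : {i // ¬ p i} → X) :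
      (fun i : {i // p i} => (Equiv.piEquivPiSubtypeProd p fun _ => X).symm (a, b) i) = a := by
    ext i; simp [Equiv.piEquivPiSubtypeProd_symm_apply, i.2]
  simp only [h, Finset.sum_const, Finset.card_univ, Fintype.card_pi, Finset.prod_const,
    nsmul_eq_mul, Finset.mul_sum]
  simp

lemma distLoc_eq_sum_subtype {M d : ℕ} (ℓ : Fin d → Bool) (l x : Fin d → ZMod M) :
    distLoc ℓ l x = ∑ j : {j // ℓ j = true}, torusD M (x j) (l j) := by
  rw [distLoc, ← Finset.sum_filter, Finset.sum_subtype (p := fun j => ℓ j = true)]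
  simp

/-- counting estimate of Lemma C.2. For `ζ ∈ 𝒮` and `k ∈ ℕ₀`,
`C := ∑_{z∈ℤ^k} ζ(‖z‖₁)` is finite, and for every `d ≥ 1`, even `M ≥ 2`, and localization
datum `L = (ℓ,l)` in `Λ(M)` with `|ℓ| = k`: `∑_{x∈Λ(M)} ζ(dist(x,L)) ≤ C · M^{d−k}`. -/
theorem statement10 (ζ : ℝ → ℝ) (hζ : InS ζ) (k : ℕ) :
    Summable (fun z : Fin k → ℤ => ζ (l1norm z)) ∧
    ∀ (d : ℕ), 1 ≤ d → ∀ (M : ℕ) (_ : NeZero M), Even M → 2 ≤ M →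
      ∀ (ℓ : Fin d → Bool) (l : Fin d → ZMod M),
        (Finset.univ.filter fun j => ℓ j = true).card = k →
        ∑ x : Fin d → ZMod M, ζ (distLoc ℓ l x) ≤
          (∑' z : Fin k → ℤ, ζ (l1norm z)) * (M : ℝ) ^ (d - k) := by
  refine ⟨hζ.summable_l1norm k, fun d _ M _ _ _ ℓ l hcard => ?_⟩
  have hk : Fintype.card {j // ℓ j = true} = k := by rwa [Fintype.card_subtype]
  let F : ({j // ℓ j = true} → ZMod M) → ℝ := fun a => ζ (∑ j, torusD M (a j) (l j) : ℕ)
  calc ∑ x, ζ (distLoc ℓ l x) = M ^ (d - k) * ∑ a, F a := by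
        simp only [distLoc_eq_sum_subtype]
        rw [Fintype.sum_comp_restrict_subtype (fun j => ℓ j = true) F, ZMod.card,
          Fintype.card_subtype_compl, hk, Fintype.card_fin]
    _ ≤ M ^ (d - k) * ∑' z : Fin k → ℤ, ζ (l1norm z) := by
        gcongr
        exact sum_sum_torusD_le_tsum_l1norm hk (fun j => l j)
          (fun n => (hζ.1 n n.cast_nonneg).le) (hζ.summable_l1norm k)
    _ = (∑' z : Fin k → ℤ, ζ (l1norm z)) * M ^ (d - k) := mul_comm _ _
end
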